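/- Assume |⟦γ⟧| < σ and let χ : [−ℓ,ℓ] → ℝ be the unique twice continuously differentiable solution of the equilibrium capillary problem with pressure P = 0. Set M_min = ∫_{−ℓ}^{ℓ} ( χ(x) − min_{[−ℓ,ℓ]} χ ) dx ≥ 0. Then for each M_top > M_min there exists a unique pair (ζ₀, P₀), with ζ₀ : [−ℓ,ℓ] → ℝ twice continuously differentiable and P₀ ∈ ℝ, solving the equilibrium capillary problem with pressure P₀ and satisfying ∫_{−ℓ}^{ℓ} ζ₀(x) dx = M_top. Moreover this ζ₀ is infinitely differentiable, even, strictly positive on [−ℓ,ℓ], and P₀ = (g·M_top − 2⟦γ⟧)/(2ℓ). -/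

import Mathlib

open Set MeasureTheory

/-- One-sided derivative of a function regarded as a function on `[-ℓ, ℓ]`. -/
noncomputable def capD (ℓ : ℝ) (ζ : ℝ → ℝ) : ℝ → ℝ :=
  derivWithin ζ (Set.Icc (-ℓ) ℓ)

/-- The mean curvature operator `𝓗(ζ) = (ζ'/√(1+(ζ')²))'` on `[-ℓ, ℓ]`. -/
noncomputable def meanCurv (ℓ : ℝ) (ζ : ℝ → ℝ) : ℝ → ℝ :=
  derivWithin (fun x => capD ℓ ζ x / Real.sqrt (1 + (capD ℓ ζ x) ^ 2)) (Set.Icc (-ℓ) ℓ)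

/-- `ζ` is a twice continuously differentiable solution of the equilibrium capillary
problem on `[-ℓ, ℓ]` with pressure `P`. -/
def IsCapSol (g σ ℓ γ P : ℝ) (ζ : ℝ → ℝ) : Prop :=
  ContDiffOn ℝ 2 ζ (Set.Icc (-ℓ) ℓ) ∧
  (∀ x ∈ Set.Ioo (-ℓ) ℓ, g * ζ x - σ * meanCurv ℓ ζ x = P) ∧
  σ * capD ℓ ζ ℓ / Real.sqrt (1 + (capD ℓ ζ ℓ) ^ 2) = γ ∧
  σ * capD ℓ ζ (-ℓ) / Real.sqrt (1 + (capD ℓ ζ (-ℓ)) ^ 2) = -γ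

/-- The capillary energy functional `𝓘`, expressed in terms of a function `ζ`
and its derivative `ζ'`. -/
noncomputable def capEnergy (g σ ℓ γ : ℝ) (ζ ζ' : ℝ → ℝ) : ℝ :=
  (∫ x in (-ℓ)..ℓ, (g / 2 * ζ x ^ 2 + σ * Real.sqrt (1 + ζ' x ^ 2))) -
    γ * (ζ ℓ + ζ (-ℓ))

/-- `ψ ∈ W^{1,1}((-ℓ,ℓ))` with weak derivative `ψ'`. -/
def IsW11 (ℓ : ℝ) (ψ ψ' : ℝ → ℝ) : Prop :=
  MeasureTheory.IntegrableOn ψ' (Set.Ioo (-ℓ) ℓ) ∧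
  ∀ x ∈ Set.Icc (-ℓ) ℓ, ψ x = ψ (-ℓ) + ∫ t in (-ℓ)..x, ψ' t

/-!
Integrating the equation `σ (ζ'/√(1+ζ'²))' = gζ - P` against the contact-angle conditions
gives `g ∫ζ - 2ℓP = 2γ`, so the mass fixes the pressure. Adding a constant `c` to a solution
adds `gc` to the pressure, hence `χ + c` with `c` fitted to the mass is the solution sought; it
is positive exactly when the mass exceeds `Mmin`. For two solutions of equal mass (hence equal
pressure), multiplying the difference of the equations by `w = ζ₁ - ζ₂` and integrating by parts
gives `∫ g w² + σ (F ζ₁' - F ζ₂') (ζ₁' - ζ₂') = 0` with `F t = t/√(1+t²)` increasing, so `w = 0`.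
By uniqueness every solution is even, since its reflection is a solution of the same mass.
Smoothness follows by bootstrapping `ζ' = F⁻¹ (F ζ')`, where `(F ζ')' = (gζ - P)/σ`.
-/

open scoped ContDiff

noncomputable def slopeSin (t : ℝ) : ℝ := t / √(1 + t ^ 2)

noncomputable def slopeOfSin (y : ℝ) : ℝ := y / √(1 - y ^ 2)

lemma slopeSin_eq_sin_arctan (t : ℝ) : slopeSin t = Real.sin (Real.arctan t) :=
  (Real.sin_arctan t).symm

lemma monotone_slopeSin : Monotone slopeSin := by
  intro s t hst
  simpa only [slopeSin_eq_sin_arctan] using Real.sin_arctan_strictMono.monotone hst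

lemma contDiff_slopeSin {n : WithTop ℕ∞} : ContDiff ℝ n slopeSin := by
  rw [show slopeSin = Real.sin ∘ Real.arctan from funext slopeSin_eq_sin_arctan]
  exact Real.contDiff_sin.comp Real.contDiff_arctan

lemma slopeSin_neg (t : ℝ) : slopeSin (-t) = -slopeSin t := by
  rw [slopeSin, slopeSin, neg_sq, neg_div]

lemma one_sub_slopeSin_sq (t : ℝ) : 1 - slopeSin t ^ 2 = (1 + t ^ 2)⁻¹ := by
  have : 0 < 1 + t ^ 2 := by positivity
  rw [slopeSin, div_pow, Real.sq_sqrt this.le]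
  field_simp
  ring

lemma slopeSin_mem_Ioo (t : ℝ) : slopeSin t ∈ Ioo (-1 : ℝ) 1 := by
  have h : 0 < 1 - slopeSin t ^ 2 := by rw [one_sub_slopeSin_sq]; positivity
  constructor <;> nlinarith

lemma slopeOfSin_slopeSin (t : ℝ) : slopeOfSin (slopeSin t) = t := by
  have : 0 < 1 + t ^ 2 := by positivity
  rw [slopeOfSin, one_sub_slopeSin_sq, Real.sqrt_inv, slopeSin]
  field_simp

lemma contDiffOn_slopeOfSin {n : WithTop ℕ∞} : ContDiffOn ℝ n slopeOfSin (Ioo (-1) 1) := by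
  have hpos : ∀ y ∈ Ioo (-1 : ℝ) 1, 0 < 1 - y ^ 2 := fun y hy => by nlinarith [hy.1, hy.2]
  refine contDiffOn_id.div ((contDiffOn_const.sub (contDiffOn_id.pow 2)).sqrt
    fun y hy => (hpos y hy).ne') fun y hy => (Real.sqrt_pos.2 (hpos y hy)).ne'

lemma capD_add_const (ℓ c : ℝ) (ζ : ℝ → ℝ) : capD ℓ (fun x => ζ x + c) = capD ℓ ζ :=
  funext fun _ => derivWithin_add_const c

lemma meanCurv_add_const (ℓ c : ℝ) (ζ : ℝ → ℝ) : meanCurv ℓ (fun x => ζ x + c) = meanCurv ℓ ζ := by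
  rw [meanCurv, capD_add_const, meanCurv]

lemma capD_comp_neg (ℓ : ℝ) (ζ : ℝ → ℝ) :
    capD ℓ (fun x => ζ (-x)) = fun x => -capD ℓ ζ (-x) := by
  funext x
  rw [capD, derivWithin_comp_neg, neg_Icc, neg_neg, capD]

lemma meanCurv_eq_derivWithin (ℓ : ℝ) (ζ : ℝ → ℝ) :
    meanCurv ℓ ζ = derivWithin (fun x => slopeSin (capD ℓ ζ x)) (Icc (-ℓ) ℓ) :=
  rfl

lemma meanCurv_comp_neg (ℓ : ℝ) (ζ : ℝ → ℝ) :
    meanCurv ℓ (fun x => ζ (-x)) = fun x => meanCurv ℓ ζ (-x) := by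
  funext x
  simp only [meanCurv_eq_derivWithin, capD_comp_neg, slopeSin_neg]
  rw [derivWithin_comp_neg (f := fun y => -slopeSin (capD ℓ ζ y)), derivWithin.fun_neg, neg_Icc,
    neg_neg, neg_neg]

lemma eqOn_zero_of_integral_eq_zero {f : ℝ → ℝ} {a b : ℝ} (hab : a < b)
    (hf : ContinuousOn f (Icc a b)) (hnonneg : ∀ x ∈ Icc a b, 0 ≤ f x)
    (hint : ∫ x in a..b, f x = 0) : EqOn f 0 (Icc a b) := by
  have hae : f =ᵐ[volume.restrict (Ioc a b)] 0 := by
    refine (intervalIntegral.integral_eq_zero_iff_of_le_of_nonneg_ae hab.le ?_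
      (hf.intervalIntegrable_of_Icc hab.le)).1 hint
    filter_upwards [ae_restrict_mem measurableSet_Ioc] with x hx
    exact hnonneg x (Ioc_subset_Icc_self hx)
  rw [Measure.restrict_congr_set Ioc_ae_eq_Icc] at hae
  exact Measure.eqOn_Icc_of_ae_eq volume hab.ne hae hf continuousOn_const

namespace IsCapSol

variable {g σ ℓ γ P : ℝ} {ζ : ℝ → ℝ}

lemma add_const (h : IsCapSol g σ ℓ γ P ζ) (c : ℝ) :
    IsCapSol g σ ℓ γ (P + g * c) (fun x => ζ x + c) := by
  obtain ⟨hζ, heq, hright, hleft⟩ := h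
  refine ⟨hζ.add contDiffOn_const, fun x hx => ?_, ?_, ?_⟩
  · rw [meanCurv_add_const, ← heq x hx]
    ring
  all_goals rwa [capD_add_const]

lemma comp_neg (h : IsCapSol g σ ℓ γ P ζ) : IsCapSol g σ ℓ γ P (fun x => ζ (-x)) := by
  obtain ⟨hζ, heq, hright, hleft⟩ := h
  refine ⟨hζ.comp contDiff_neg.contDiffOn fun x hx => ⟨by linarith [hx.2], by linarith [hx.1]⟩,
    fun x hx => ?_, ?_, ?_⟩
  · rw [meanCurv_comp_neg]
    exact heq (-x) ⟨by linarith [hx.2], by linarith [hx.1]⟩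
  · rw [capD_comp_neg]
    simp only [neg_sq, mul_neg, neg_div, hleft, neg_neg]
  · rw [capD_comp_neg]
    simp only [neg_neg, neg_sq, mul_neg, neg_div, hright]

lemma contDiffOn_capD (hℓ : 0 < ℓ) (h : IsCapSol g σ ℓ γ P ζ) :
    ContDiffOn ℝ 1 (capD ℓ ζ) (Icc (-ℓ) ℓ) :=
  ((contDiffOn_succ_iff_derivWithin (uniqueDiffOn_Icc (by linarith))).1 h.1).2.2

lemma contDiffOn_slopeSin_capD (hℓ : 0 < ℓ) (h : IsCapSol g σ ℓ γ P ζ) :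
    ContDiffOn ℝ 1 (fun x => slopeSin (capD ℓ ζ x)) (Icc (-ℓ) ℓ) :=
  contDiff_slopeSin.comp_contDiffOn (h.contDiffOn_capD hℓ)

lemma meanCurv_eqOn (hσ : σ ≠ 0) (hℓ : 0 < ℓ) (h : IsCapSol g σ ℓ γ P ζ) :
    EqOn (meanCurv ℓ ζ) (fun x => (g * ζ x - P) / σ) (Icc (-ℓ) ℓ) := by
  have hIoo : EqOn (meanCurv ℓ ζ) (fun x => (g * ζ x - P) / σ) (Ioo (-ℓ) ℓ) := fun x hx => by
    rw [eq_div_iff hσ, ← h.2.1 x hx]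
    ring
  refine hIoo.of_subset_closure ?_ ?_ Ioo_subset_Icc_self (closure_Ioo (by linarith)).ge
  · exact (h.contDiffOn_slopeSin_capD hℓ).continuousOn_derivWithin
      (uniqueDiffOn_Icc (by linarith)) le_rfl
  · exact (continuousOn_const.mul h.1.continuousOn |>.sub continuousOn_const).div_const σ

lemma hasDerivAt (h : IsCapSol g σ ℓ γ P ζ) {x : ℝ} (hx : x ∈ Ioo (-ℓ) ℓ) :
    HasDerivAt ζ (capD ℓ ζ x) x :=
  ((h.1.differentiableOn (by norm_num) x (Ioo_subset_Icc_self hx)).hasDerivWithinAt).hasDerivAt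
    (Icc_mem_nhds hx.1 hx.2)

lemma hasDerivAt_slopeSin_capD (hσ : σ ≠ 0) (hℓ : 0 < ℓ) (h : IsCapSol g σ ℓ γ P ζ) {x : ℝ}
    (hx : x ∈ Ioo (-ℓ) ℓ) :
    HasDerivAt (fun x => slopeSin (capD ℓ ζ x)) ((g * ζ x - P) / σ) x := by
  have hmc : meanCurv ℓ ζ x = (g * ζ x - P) / σ := h.meanCurv_eqOn hσ hℓ (Ioo_subset_Icc_self hx)
  rw [← hmc]
  exact ((h.contDiffOn_slopeSin_capD hℓ).differentiableOn one_ne_zero x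
    (Ioo_subset_Icc_self hx)).hasDerivWithinAt.hasDerivAt (Icc_mem_nhds hx.1 hx.2)

lemma slopeSin_capD_right (h : IsCapSol g σ ℓ γ P ζ) : σ * slopeSin (capD ℓ ζ ℓ) = γ := by
  rw [slopeSin, ← mul_div_assoc, h.2.2.1]

lemma slopeSin_capD_left (h : IsCapSol g σ ℓ γ P ζ) : σ * slopeSin (capD ℓ ζ (-ℓ)) = -γ := by
  rw [slopeSin, ← mul_div_assoc, h.2.2.2]

lemma mass_balance (hσ : σ ≠ 0) (hℓ : 0 < ℓ) (h : IsCapSol g σ ℓ γ P ζ) :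
    g * (∫ x in (-ℓ)..ℓ, ζ x) - 2 * ℓ * P = 2 * γ := by
  have hζi : IntervalIntegrable ζ volume (-ℓ) ℓ :=
    h.1.continuousOn.intervalIntegrable_of_Icc (by linarith)
  have hftc : (∫ x in (-ℓ)..ℓ, (g * ζ x - P)) =
      σ * slopeSin (capD ℓ ζ ℓ) - σ * slopeSin (capD ℓ ζ (-ℓ)) := by
    refine intervalIntegral.integral_eq_sub_of_hasDerivAt_of_le (by linarith)
      (continuousOn_const.mul (h.contDiffOn_slopeSin_capD hℓ).continuousOn) (fun x hx => ?_)
      ((hζi.const_mul g).sub intervalIntegrable_const)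
    exact ((h.hasDerivAt_slopeSin_capD hσ hℓ hx).const_mul σ).congr_deriv (mul_div_cancel₀ _ hσ)
  rw [h.slopeSin_capD_right, h.slopeSin_capD_left, intervalIntegral.integral_sub
    (hζi.const_mul g) intervalIntegrable_const, intervalIntegral.integral_const_mul,
    intervalIntegral.integral_const, smul_eq_mul] at hftc
  linarith

lemma pressure_eq (hσ : σ ≠ 0) (hℓ : 0 < ℓ) (h : IsCapSol g σ ℓ γ P ζ) {M : ℝ}
    (hM : ∫ x in (-ℓ)..ℓ, ζ x = M) : P = (g * M - 2 * γ) / (2 * ℓ) := by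
  rw [eq_div_iff (by positivity), ← hM, ← h.mass_balance hσ hℓ]
  ring

lemma eqOn_of_integral_eq (hg : 0 < g) (hσ : 0 < σ) (hℓ : 0 < ℓ) {ζ₁ ζ₂ : ℝ → ℝ} {P₁ P₂ : ℝ}
    (h₁ : IsCapSol g σ ℓ γ P₁ ζ₁) (h₂ : IsCapSol g σ ℓ γ P₂ ζ₂)
    (hmass : ∫ x in (-ℓ)..ℓ, ζ₁ x = ∫ x in (-ℓ)..ℓ, ζ₂ x) : EqOn ζ₁ ζ₂ (Icc (-ℓ) ℓ) := by
  obtain rfl : P₁ = P₂ := by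
    rw [h₁.pressure_eq hσ.ne' hℓ hmass, h₂.pressure_eq hσ.ne' hℓ rfl]
  set w := fun x => ζ₁ x - ζ₂ x
  set q := fun x => σ * (slopeSin (capD ℓ ζ₁ x) - slopeSin (capD ℓ ζ₂ x))
  -- `q w` vanishes at both ends and `(q w)' = D ≥ g w²`
  set D := fun x => g * w x ^ 2 + q x * (capD ℓ ζ₁ x - capD ℓ ζ₂ x)
  have hwc : ContinuousOn w (Icc (-ℓ) ℓ) := h₁.1.continuousOn.sub h₂.1.continuousOn
  have hqc : ContinuousOn q (Icc (-ℓ) ℓ) := continuousOn_const.mul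
    ((h₁.contDiffOn_slopeSin_capD hℓ).continuousOn.sub
      (h₂.contDiffOn_slopeSin_capD hℓ).continuousOn)
  have hDc : ContinuousOn D (Icc (-ℓ) ℓ) := ((continuousOn_const.mul (hwc.pow 2)).add
    (hqc.mul ((h₁.contDiffOn_capD hℓ).continuousOn.sub (h₂.contDiffOn_capD hℓ).continuousOn)))
  have hD : ∀ x, g * w x ^ 2 ≤ D x := fun x => by
    have hmono : 0 ≤ (slopeSin (capD ℓ ζ₁ x) - slopeSin (capD ℓ ζ₂ x)) *
        (capD ℓ ζ₁ x - capD ℓ ζ₂ x) := by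
      rcases le_total (capD ℓ ζ₁ x) (capD ℓ ζ₂ x) with hu | hu
      · exact mul_nonneg_of_nonpos_of_nonpos (sub_nonpos.2 (monotone_slopeSin hu)) (sub_nonpos.2 hu)
      · exact mul_nonneg (sub_nonneg.2 (monotone_slopeSin hu)) (sub_nonneg.2 hu)
    simp only [D, q, mul_assoc]
    nlinarith [mul_nonneg hσ.le hmono]
  have hq_right : q ℓ = 0 := by
    simp only [q, mul_sub, h₁.slopeSin_capD_right, h₂.slopeSin_capD_right, sub_self]
  have hq_left : q (-ℓ) = 0 := by
    simp only [q, mul_sub, h₁.slopeSin_capD_left, h₂.slopeSin_capD_left, sub_self]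
  have hint : ∫ x in (-ℓ)..ℓ, D x = 0 := by
    rw [intervalIntegral.integral_eq_sub_of_hasDerivAt_of_le (f := fun x => q x * w x) (by linarith)
      (hqc.mul hwc) (fun x hx => ?_) (hDc.intervalIntegrable_of_Icc (by linarith)),
      hq_right, hq_left, zero_mul, zero_mul, sub_zero]
    have hq : HasDerivAt q (g * w x) x := by
      refine (((h₁.hasDerivAt_slopeSin_capD hσ.ne' hℓ hx).sub
        (h₂.hasDerivAt_slopeSin_capD hσ.ne' hℓ hx)).const_mul σ).congr_deriv ?_
      field_simp
      ring
    exact (hq.mul ((h₁.hasDerivAt hx).fun_sub (h₂.hasDerivAt hx))).congr_deriv (by ring)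
  have hD0 := eqOn_zero_of_integral_eq_zero (by linarith) hDc
    (fun x _ => (by positivity : 0 ≤ g * w x ^ 2).trans (hD x)) hint
  intro x hx
  have hgw : g * w x ^ 2 ≤ 0 := (hD x).trans_eq (hD0 hx)
  have hw2 : w x ^ 2 ≤ 0 := by nlinarith
  exact sub_eq_zero.1 (pow_eq_zero_iff two_ne_zero |>.1 (hw2.antisymm (sq_nonneg _)))

lemma even (hg : 0 < g) (hσ : 0 < σ) (hℓ : 0 < ℓ) (h : IsCapSol g σ ℓ γ P ζ) :
    ∀ x ∈ Icc (-ℓ) ℓ, ζ (-x) = ζ x :=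
  fun _ hx => h.comp_neg.eqOn_of_integral_eq hg hσ hℓ h
    (by simp [intervalIntegral.integral_comp_neg]) hx

lemma contDiffOn_infty (hσ : σ ≠ 0) (hℓ : 0 < ℓ) (h : IsCapSol g σ ℓ γ P ζ) :
    ContDiffOn ℝ ∞ ζ (Icc (-ℓ) ℓ) := by
  have hu : UniqueDiffOn ℝ (Icc (-ℓ) ℓ) := uniqueDiffOn_Icc (by linarith)
  have hv : DifferentiableOn ℝ (fun x => slopeSin (capD ℓ ζ x)) (Icc (-ℓ) ℓ) :=
    (h.contDiffOn_slopeSin_capD hℓ).differentiableOn one_ne_zero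
  have step : ∀ n : ℕ, ContDiffOn ℝ n ζ (Icc (-ℓ) ℓ) → ContDiffOn ℝ (n + 1) ζ (Icc (-ℓ) ℓ) := by
    intro n hn
    have hvn : ContDiffOn ℝ (n + 1) (fun x => slopeSin (capD ℓ ζ x)) (Icc (-ℓ) ℓ) :=
      (contDiffOn_succ_iff_derivWithin hu).2 ⟨hv, by simp,
        (((contDiffOn_const.mul hn).sub contDiffOn_const).div_const σ).congr
          (h.meanCurv_eqOn hσ hℓ)⟩
    have hun : ContDiffOn ℝ n (capD ℓ ζ) (Icc (-ℓ) ℓ) :=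
      ((contDiffOn_slopeOfSin.comp hvn fun x _ => slopeSin_mem_Ioo _).congr
        fun x _ => (slopeOfSin_slopeSin _).symm).of_le le_self_add
    exact (contDiffOn_succ_iff_derivWithin hu).2 ⟨h.1.differentiableOn two_ne_zero, by simp, hun⟩
  refine _root_.contDiffOn_infty.2 fun n => ?_
  induction n with
  | zero => exact h.1.of_le (by norm_num)
  | succ n ih => exact_mod_cast step n ih

end IsCapSol
theorem stmt4_general (g σ ℓ γ : ℝ) (hg : 0 < g) (hσ : 0 < σ) (hℓ : 0 < ℓ)
    (χ : ℝ → ℝ) (hχ : IsCapSol g σ ℓ γ 0 χ) :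
    let m : ℝ := sInf (χ '' Set.Icc (-ℓ) ℓ)
    let Mmin : ℝ := ∫ x in (-ℓ)..ℓ, (χ x - m)
    0 ≤ Mmin ∧
    ∀ Mtop : ℝ, Mmin < Mtop →
      ∃ ζ₀ : ℝ → ℝ, ∃ P₀ : ℝ,
        IsCapSol g σ ℓ γ P₀ ζ₀ ∧
        (∫ x in (-ℓ)..ℓ, ζ₀ x) = Mtop ∧
        (∀ ζ : ℝ → ℝ, ∀ P : ℝ, IsCapSol g σ ℓ γ P ζ →
          (∫ x in (-ℓ)..ℓ, ζ x) = Mtop →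
          Set.EqOn ζ ζ₀ (Set.Icc (-ℓ) ℓ) ∧ P = P₀) ∧
        ContDiffOn ℝ ((⊤ : ℕ∞) : WithTop ℕ∞) ζ₀ (Set.Icc (-ℓ) ℓ) ∧
        (∀ x ∈ Set.Icc (-ℓ) ℓ, ζ₀ (-x) = ζ₀ x) ∧
        (∀ x ∈ Set.Icc (-ℓ) ℓ, 0 < ζ₀ x) ∧
        P₀ = (g * Mtop - 2 * γ) / (2 * ℓ) := by
  intro m Mmin
  have hχi : IntervalIntegrable χ volume (-ℓ) ℓ :=
    hχ.1.continuousOn.intervalIntegrable_of_Icc (by linarith)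
  have hm : ∀ x ∈ Icc (-ℓ) ℓ, m ≤ χ x := fun x hx =>
    csInf_le (isCompact_Icc.image_of_continuousOn hχ.1.continuousOn).bddBelow
      (mem_image_of_mem χ hx)
  have hMmin : Mmin = (∫ x in (-ℓ)..ℓ, χ x) - 2 * ℓ * m := by
    simp only [Mmin, intervalIntegral.integral_sub hχi intervalIntegrable_const,
      intervalIntegral.integral_const, smul_eq_mul]
    ring
  refine ⟨intervalIntegral.integral_nonneg (by linarith) fun x hx => sub_nonneg.2 (hm x hx),
    fun Mtop hMtop => ?_⟩
  set c := (Mtop - ∫ x in (-ℓ)..ℓ, χ x) / (2 * ℓ)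
  have hsol : IsCapSol g σ ℓ γ (g * c) (fun x => χ x + c) := by
    simpa only [zero_add] using hχ.add_const c
  have hmass : ∫ x in (-ℓ)..ℓ, (χ x + c) = Mtop := by
    simp only [intervalIntegral.integral_add hχi intervalIntegrable_const,
      intervalIntegral.integral_const, smul_eq_mul, c]
    field_simp
    ring
  have hc : -m < c := by
    rw [lt_div_iff₀ (by positivity)]
    linarith
  refine ⟨_, g * c, hsol, hmass, fun ζ P h hM => ⟨?_, ?_⟩, hsol.contDiffOn_infty hσ.ne' hℓ,
    hsol.even hg hσ hℓ, fun x hx => by linarith [hm x hx], hsol.pressure_eq hσ.ne' hℓ hmass⟩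
  · exact h.eqOn_of_integral_eq hg hσ hℓ hsol (hM.trans hmass.symm)
  · rw [h.pressure_eq hσ.ne' hℓ hM, hsol.pressure_eq hσ.ne' hℓ hmass]

/-- Given the zero-pressure solution `χ`, for every
`Mtop > Mmin = ∫ (χ - min χ)` there is a unique pair `(ζ₀, P₀)` solving the
equilibrium capillary problem with total mass `Mtop`; moreover `ζ₀` is smooth,
even, strictly positive, and `P₀ = (g Mtop - 2γ)/(2ℓ)`. -/
theorem stmt4 (g σ ℓ γ : ℝ) (hg : 0 < g) (hσ : 0 < σ) (hℓ : 0 < ℓ) (hγ : |γ| < σ)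
    (χ : ℝ → ℝ) (hχ : IsCapSol g σ ℓ γ 0 χ) :
    let m : ℝ := sInf (χ '' Set.Icc (-ℓ) ℓ)
    let Mmin : ℝ := ∫ x in (-ℓ)..ℓ, (χ x - m)
    0 ≤ Mmin ∧
    ∀ Mtop : ℝ, Mmin < Mtop →
      ∃ ζ₀ : ℝ → ℝ, ∃ P₀ : ℝ,
        IsCapSol g σ ℓ γ P₀ ζ₀ ∧
        (∫ x in (-ℓ)..ℓ, ζ₀ x) = Mtop ∧
        (∀ ζ : ℝ → ℝ, ∀ P : ℝ, IsCapSol g σ ℓ γ P ζ →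
          (∫ x in (-ℓ)..ℓ, ζ x) = Mtop →
          Set.EqOn ζ ζ₀ (Set.Icc (-ℓ) ℓ) ∧ P = P₀) ∧
        ContDiffOn ℝ ((⊤ : ℕ∞) : WithTop ℕ∞) ζ₀ (Set.Icc (-ℓ) ℓ) ∧
        (∀ x ∈ Set.Icc (-ℓ) ℓ, ζ₀ (-x) = ζ₀ x) ∧
        (∀ x ∈ Set.Icc (-ℓ) ℓ, 0 < ζ₀ x) ∧
        P₀ = (g * Mtop - 2 * γ) / (2 * ℓ) :=
  stmt4_general g σ ℓ γ hg hσ hℓ χ hχ
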